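/- For all l ∈ ℕ, 0 ≤ m ≤ l, ρ > 0 and x, y ∈ ℝ, with z = x + iy, J_{m, l−m}(z, ρ) = ∑_{k=0}^{l} i^{l−k} · ( ∑_{u+v=k} C(m, u) · C(l−m, v) · (−1)^{l−m−v} ) · H_k(x, ρ/2) · H_{l−k}(y, ρ/2), where the inner sum is over pairs (u,v) of natural numbers with u + v = k (binomial coefficients C(m,u) and C(l−m,v) vanish when u > m or v > l−m). -/

import Mathlib

open Complex Finset

noncomputable section

/-- Hermite–Laguerre–Ito polynomial. -/
def HLI (m n : ℕ) (z : ℂ) (ρ : ℝ) : ℂ :=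
  ∑ r ∈ Finset.range (min m n + 1),
    (-1 : ℂ) ^ r * (r.factorial : ℂ) * (m.choose r : ℂ) * (n.choose r : ℂ) *
      z ^ (m - r) * (starRingEnd ℂ z) ^ (n - r) * (ρ : ℂ) ^ r

/-- Hermite polynomial with variance parameter ρ:
`H_n(x,ρ) = ∑_{k=0}^{⌊n/2⌋} C(n,2k) (2k−1)!! x^{n−2k} (−ρ)^k`. -/
def Herm (n : ℕ) (x ρ : ℝ) : ℝ :=
  ∑ k ∈ Finset.range (n / 2 + 1),
    (n.choose (2 * k) : ℝ) * ((2 * k - 1).doubleFactorial : ℝ) * x ^ (n - 2 * k) * (-ρ) ^ k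

open Polynomial

def CH (n : ℕ) (x ρ : ℂ) : ℂ :=
  ∑ k ∈ Finset.range (n / 2 + 1),
    (n.choose (2 * k) : ℂ) * ((2 * k - 1).doubleFactorial : ℂ) * x ^ (n - 2 * k) * (-ρ) ^ k

lemma CH_zero (x ρ : ℂ) : CH 0 x ρ = 1 := by simp [CH]

lemma CH_one (x ρ : ℂ) : CH 1 x ρ = x := by simp [CH]

lemma df_odd (i : ℕ) : (2 * i + 1).doubleFactorial = (2 * i + 1) * (2 * i - 1).doubleFactorial := by
  cases i with
  | zero => simp [Nat.doubleFactorial]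
  | succ t =>
    have h1 : 2 * (t + 1) + 1 = (2 * t + 1) + 2 := by omega
    have h2 : 2 * (t + 1) - 1 = 2 * t + 1 := by omega
    rw [h1, h2, Nat.doubleFactorial_add_two]

lemma choose_df (t i : ℕ) :
    (t + 1).choose (2 * i + 1) * (2 * i + 1).doubleFactorial
      = (t + 1) * (t.choose (2 * i) * (2 * i - 1).doubleFactorial) := by
  rw [df_odd, ← mul_assoc, mul_comm ((t+1).choose (2*i+1)) (2*i+1)]
  have := Nat.add_one_mul_choose_eq t (2 * i)
  rw [mul_comm (2*i+1) ((t+1).choose (2*i+1)), ← this]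
  ring

lemma CH_rec (k : ℕ) (x ρ : ℂ) :
    x * CH k x ρ = CH (k + 1) x ρ + k * ρ * CH (k - 1) x ρ := by
  cases k with
  | zero => simp [CH_zero, CH_one]
  | succ t =>
    -- goal : x * CH (t+1) = CH (t+2) + (t+1) * ρ * CH t
    have hxCH : x * CH (t + 1) x ρ =
        x ^ (t + 2) + ∑ i ∈ Finset.range ((t + 1) / 2),
          ((t+1).choose (2 * (i+1)) : ℂ) * ((2 * (i+1) - 1).doubleFactorial : ℂ)
            * x ^ (t + 2 - 2 * (i+1)) * (-ρ) ^ (i+1) := by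
      rw [CH, Finset.mul_sum, Finset.sum_range_succ']
      rw [add_comm]
      congr 1
      · simp [pow_succ, mul_comm]
      · apply Finset.sum_congr rfl
        intro i hi
        have hi' : 2 * (i + 1) ≤ t + 1 := by
          have := Finset.mem_range.mp hi; omega
        have : t + 2 - 2 * (i+1) = (t + 1 - 2 * (i+1)) + 1 := by omega
        rw [this, pow_succ]
        ring
    have hCH2 : CH (t+2) x ρ =
        (∑ i ∈ Finset.range ((t+2)/2),
          ((t+1).choose (2*(i+1)) : ℂ) * ((2*(i+1)-1).doubleFactorial : ℂ)
            * x^(t+2-2*(i+1)) * (-ρ)^(i+1))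
      + (∑ i ∈ Finset.range ((t+2)/2),
          ((t+1).choose (2*i+1) : ℂ) * ((2*i+1).doubleFactorial : ℂ)
            * x^(t+2-2*(i+1)) * (-ρ)^(i+1))
      + x^(t+2) := by
      rw [CH, Finset.sum_range_succ']
      congr 1
      · rw [← Finset.sum_add_distrib]
        apply Finset.sum_congr rfl
        intro i _
        have hc : ((t + 2).choose (2 * (i+1)) : ℂ)
            = ((t+1).choose (2*(i+1)) : ℂ) + ((t+1).choose (2*i+1) : ℂ) := by
          have h1 : 2*(i+1) = (2*i+1)+1 := by omega
          rw [h1, show t+2 = (t+1)+1 from rfl, Nat.choose_succ_succ]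
          push_cast
          rw [add_comm]
        have hd : 2*(i+1)-1 = 2*i+1 := by omega
        rw [hd, hc]
        ring
      · simp
    have hA : (∑ i ∈ Finset.range ((t+2)/2),
          ((t+1).choose (2*(i+1)) : ℂ) * ((2*(i+1)-1).doubleFactorial : ℂ)
            * x^(t+2-2*(i+1)) * (-ρ)^(i+1))
        = ∑ i ∈ Finset.range ((t+1)/2),
          ((t+1).choose (2*(i+1)) : ℂ) * ((2*(i+1)-1).doubleFactorial : ℂ)
            * x^(t+2-2*(i+1)) * (-ρ)^(i+1) := by
      apply (Finset.sum_subset (Finset.range_subset_range.mpr (by omega)) ?_).symm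
      intro i hi hni
      simp only [Finset.mem_range] at hi hni
      have : t+1 < 2*(i+1) := by omega
      simp [Nat.choose_eq_zero_of_lt this]
    have hB : (∑ i ∈ Finset.range ((t+2)/2),
          ((t+1).choose (2*i+1) : ℂ) * ((2*i+1).doubleFactorial : ℂ)
            * x^(t+2-2*(i+1)) * (-ρ)^(i+1))
        = -(((t:ℂ)+1) * ρ * CH t x ρ) := by
      rw [CH, Finset.mul_sum, ← Finset.sum_neg_distrib]
      have hr : (t+2)/2 = t/2 + 1 := by omega
      rw [hr]
      apply Finset.sum_congr rfl
      intro i _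
      have hc : ((t+1).choose (2*i+1) : ℂ) * ((2*i+1).doubleFactorial : ℂ)
          = ((t:ℂ)+1) * ((t.choose (2*i) : ℂ) * ((2*i-1).doubleFactorial : ℂ)) := by
        exact_mod_cast congrArg (Nat.cast : ℕ → ℂ) (choose_df t i)
      have he : t+2-2*(i+1) = t-2*i := by omega
      rw [he, hc, pow_succ]
      ring
    rw [hxCH, hCH2, hA, hB]
    push_cast
    ring


def cc (m n k : ℕ) : ℂ := (((1 + X) ^ m * (X - 1) ^ n : Polynomial ℂ)).coeff k

lemma cc_natDegree (m n : ℕ) : (((1 + X) ^ m * (X - 1) ^ n : Polynomial ℂ)).natDegree ≤ m + n := by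
  apply natDegree_mul_le.trans
  have h1 : ((1 + X : Polynomial ℂ) ^ m).natDegree ≤ m := by
    apply natDegree_pow_le.trans
    have : (1 + X : Polynomial ℂ) = X + C 1 := by simp [add_comm]
    rw [this, natDegree_X_add_C]; omega
  have h2 : ((X - 1 : Polynomial ℂ) ^ n).natDegree ≤ n := by
    apply natDegree_pow_le.trans
    have : (X - 1 : Polynomial ℂ) = X + C (-1) := by simp [sub_eq_add_neg]
    rw [this, natDegree_X_add_C]; omega
  omega

lemma cc_vanish {m n k : ℕ} (h : m + n < k) : cc m n k = 0 :=
  coeff_eq_zero_of_natDegree_lt (lt_of_le_of_lt (cc_natDegree m n) h)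

lemma cc_succ_left (m n k : ℕ) : cc (m+1) n (k+1) = cc m n (k+1) + cc m n k := by
  unfold cc
  rw [pow_succ, mul_comm ((1+X:Polynomial ℂ)^m) (1+X), mul_assoc, add_mul, one_mul,
    coeff_add, coeff_X_mul]

lemma cc_succ_left_zero (m n : ℕ) : cc (m+1) n 0 = cc m n 0 := by
  unfold cc
  rw [pow_succ, mul_comm ((1+X:Polynomial ℂ)^m) (1+X), mul_assoc, add_mul, one_mul,
    coeff_add]
  simp [mul_coeff_zero]

lemma cc_succ_right (n k : ℕ) : cc 0 (n+1) (k+1) = cc 0 n k - cc 0 n (k+1) := by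
  unfold cc
  simp only [pow_zero, one_mul]
  rw [pow_succ, mul_comm ((X-1:Polynomial ℂ)^n) (X-1), sub_mul, one_mul,
    coeff_sub, coeff_X_mul]

lemma cc_succ_right_zero (n : ℕ) : cc 0 (n+1) 0 = - cc 0 n 0 := by
  unfold cc
  simp only [pow_zero, one_mul]
  rw [pow_succ, mul_comm ((X-1:Polynomial ℂ)^n) (X-1), sub_mul, one_mul,
    coeff_sub, mul_coeff_zero, coeff_X_zero, zero_mul, zero_sub]

lemma cc_zero_zero : cc 0 0 0 = 1 := by simp [cc]

lemma coeff_X_mul_derivative (p : Polynomial ℂ) (k : ℕ) :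
    (X * derivative p).coeff k = k * p.coeff k := by
  cases k with
  | zero => simp
  | succ j => rw [coeff_X_mul, coeff_derivative]; push_cast; ring

lemma cc_m_zero (m k : ℕ) : cc m 0 k = (m.choose k : ℂ) := by
  unfold cc
  simp only [pow_zero, mul_one]
  induction m generalizing k with
  | zero =>
    cases k with
    | zero => simp
    | succ j => simp [Nat.choose, coeff_one]
  | succ t ih =>
    rw [pow_succ, mul_comm, add_mul, one_mul]
    cases k with
    | zero => simp [ih]
    | succ j =>
      rw [coeff_add, coeff_X_mul, ih, ih, Nat.choose_succ_succ]
      push_cast; ring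

lemma cc_id3 (n k : ℕ) :
    ((k:ℂ)+1) * cc 0 n (k+1) + ((n:ℂ) - k) * cc 0 n k = 0 := by
  have hp : (X - 1 : Polynomial ℂ) * derivative ((X-1)^n) = (n : Polynomial ℂ) * (X-1)^n := by
    rw [derivative_pow]
    cases n with
    | zero => simp
    | succ t =>
      simp only [derivative_sub, derivative_X, derivative_one, sub_zero, mul_one,
        Nat.add_sub_cancel]
      rw [pow_succ]
      simp only [← C_eq_natCast]
      ring
  have := congrArg (fun p => p.coeff k) hp
  simp only [sub_mul, one_mul, coeff_sub, coeff_X_mul_derivative, coeff_derivative] at this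
  rw [show ((n : Polynomial ℂ) : Polynomial ℂ) = C (n:ℂ) by simp] at this
  rw [coeff_C_mul] at this
  unfold cc
  simp only [pow_zero, one_mul]
  have h2 := this
  push_cast at h2 ⊢
  linear_combination -h2


lemma cc_id2 (m n k : ℕ) :
    ((k:ℂ)+1) * cc m n (k+1) = ((m:ℂ)+(n:ℂ)-(k:ℂ)) * cc m n k + 2*(n:ℂ)*cc m (n-1) k := by
  cases n with
  | zero =>
    simp only [Nat.cast_zero, add_zero, mul_zero, zero_mul, Nat.zero_sub]
    rcases le_or_gt k m with hk | hk
    · have h := Nat.choose_succ_right_eq m k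
      have h2 : ((m.choose (k+1) : ℂ)) * ((k:ℂ)+1) = (m.choose k : ℂ) * ((m:ℂ)-(k:ℂ)) := by
        have := congrArg (Nat.cast : ℕ → ℂ) h
        push_cast [Nat.cast_sub hk] at this
        exact this
      rw [cc_m_zero, cc_m_zero]
      linear_combination h2
    · rw [cc_m_zero, cc_m_zero, Nat.choose_eq_zero_of_lt hk,
        Nat.choose_eq_zero_of_lt (by omega)]
      simp
  | succ t =>
    have hp : (1+X : Polynomial ℂ) * derivative ((1+X)^m*(X-1)^(t+1))
        = ((m+t+1 : ℕ) : Polynomial ℂ) * ((1+X)^m*(X-1)^(t+1))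
          + ((2*(t+1) : ℕ) : Polynomial ℂ) * ((1+X)^m*(X-1)^t) := by
      rw [derivative_mul, derivative_pow, derivative_pow]
      simp only [derivative_add, derivative_one, derivative_X, zero_add, mul_one,
        derivative_sub, sub_zero, Nat.add_sub_cancel]
      cases m with
      | zero =>
        push_cast
        simp only [← C_eq_natCast, C_add, C_1, C_0, Nat.cast_zero]
        rw [pow_succ]
        ring
      | succ s =>
        simp only [Nat.add_sub_cancel]
        push_cast
        simp only [← C_eq_natCast, C_add, C_1, C_0, Nat.cast_zero]
        rw [pow_succ (1+X:Polynomial ℂ) s, pow_succ (X-1:Polynomial ℂ) t]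
        ring
    have hc := congrArg (fun p => p.coeff k) hp
    simp only [add_mul, one_mul, coeff_add, coeff_X_mul_derivative, coeff_derivative,
      ← C_eq_natCast, coeff_C_mul] at hc
    unfold cc
    simp only [Nat.add_sub_cancel]
    push_cast at hc ⊢
    linear_combination hc

lemma cc_eq_sum (m n k : ℕ) :
    cc m n k = ∑ uv ∈ Finset.HasAntidiagonal.antidiagonal k,
      (m.choose uv.1 : ℂ) * (n.choose uv.2 : ℂ) * (-1 : ℂ)^(n - uv.2) := by
  unfold cc
  rw [coeff_mul]
  apply Finset.sum_congr rfl
  intro uv _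
  rw [coeff_one_add_X_pow, show (X-1:Polynomial ℂ) = X + C (-1) by
    rw [map_neg, C_1]; ring, coeff_X_add_C_pow]
  ring

def HLI2 (m n : ℕ) (w w' ρ : ℂ) : ℂ :=
  ∑ r ∈ Finset.range (min m n + 1),
    (-1 : ℂ) ^ r * (r.factorial : ℂ) * (m.choose r : ℂ) * (n.choose r : ℂ) *
      w ^ (m - r) * w' ^ (n - r) * ρ ^ r

lemma HLI2_zero_left (n : ℕ) (w w' ρ : ℂ) : HLI2 0 n w w' ρ = w' ^ n := by
  simp [HLI2]

lemma HLI2_zero_right (m : ℕ) (w w' ρ : ℂ) : HLI2 m 0 w w' ρ = w ^ m := by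
  simp [HLI2]

lemma HLI2_rec (m n : ℕ) (w w' ρ : ℂ) :
    HLI2 (m+1) (n+1) w w' ρ
      = w * HLI2 m (n+1) w w' ρ - ((n:ℂ)+1) * ρ * HLI2 m n w w' ρ := by
  have hmin : min (m+1) (n+1) = min m n + 1 := by omega
  -- LHS expanded via sum_range_succ'
  have hL : HLI2 (m+1) (n+1) w w' ρ
      = w ^ (m+1) * w' ^ (n+1)
        + ∑ j ∈ Finset.range (min m n + 1),
          ((-1:ℂ)^(j+1) * ((j+1).factorial : ℂ) * (m.choose (j+1) : ℂ) * ((n+1).choose (j+1) : ℂ)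
              * w ^ (m-j) * w' ^ (n-j) * ρ ^ (j+1)
            + (-1:ℂ)^(j+1) * ((j+1).factorial : ℂ) * (m.choose j : ℂ) * ((n+1).choose (j+1) : ℂ)
              * w ^ (m-j) * w' ^ (n-j) * ρ ^ (j+1)) := by
    rw [HLI2, hmin, Finset.sum_range_succ', add_comm]
    congr 1
    · simp
    · apply Finset.sum_congr rfl
      intro j _
      rw [Nat.choose_succ_succ (m) j]
      have h1 : m + 1 - (j+1) = m - j := by omega
      have h2 : n + 1 - (j+1) = n - j := by omega
      rw [h1, h2]
      push_cast
      ring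
  -- first part equals w * HLI2 m (n+1)
  have hT1 : w * HLI2 m (n+1) w w' ρ
      = w ^ (m+1) * w' ^ (n+1)
        + ∑ j ∈ Finset.range (min m n + 1),
          (-1:ℂ)^(j+1) * ((j+1).factorial : ℂ) * (m.choose (j+1) : ℂ) * ((n+1).choose (j+1) : ℂ)
            * w ^ (m-j) * w' ^ (n-j) * ρ ^ (j+1) := by
    rw [HLI2, Finset.mul_sum]
    have hsub : Finset.range (min m (n+1) + 1) ⊆ Finset.range (min m n + 1 + 1) := by
      apply Finset.range_subset_range.mpr; omega
    rw [Finset.sum_subset hsub ?_]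
    · rw [Finset.sum_range_succ', add_comm]
      congr 1
      · have : m - 0 = m := rfl
        simp [pow_succ]
        ring
      · apply Finset.sum_congr rfl
        intro j hj
        rcases Nat.lt_or_ge j m with hjm | hjm
        · have h1 : m - (j+1) + 1 = m - j := by omega
          rw [← h1, pow_succ]
          have h2 : n + 1 - (j+1) = n - j := by omega
          rw [h2]
          ring
        · have hm2 : m < j + 1 := by omega
          simp [Nat.choose_eq_zero_of_lt hm2]
    · intro i hi hni
      simp only [Finset.mem_range] at hi hni
      have : m < i := by omega
      simp [Nat.choose_eq_zero_of_lt this]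
  -- second part equals -(n+1) ρ HLI2 m n
  have hT2 : -(((n:ℂ)+1) * ρ * HLI2 m n w w' ρ)
      = ∑ j ∈ Finset.range (min m n + 1),
          (-1:ℂ)^(j+1) * ((j+1).factorial : ℂ) * (m.choose j : ℂ) * ((n+1).choose (j+1) : ℂ)
            * w ^ (m-j) * w' ^ (n-j) * ρ ^ (j+1) := by
    rw [HLI2, Finset.mul_sum, ← Finset.sum_neg_distrib]
    apply Finset.sum_congr rfl
    intro j _
    have hc : ((n+1).choose (j+1) : ℂ) * ((j:ℂ)+1) = ((n:ℂ)+1) * (n.choose j : ℂ) := by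
      have := Nat.add_one_mul_choose_eq n j
      have h := congrArg (Nat.cast : ℕ → ℂ) this
      push_cast at h
      linear_combination -h
    have hf : (((j+1).factorial : ℂ)) = ((j:ℂ)+1) * (j.factorial : ℂ) := by
      rw [Nat.factorial_succ]; push_cast; ring
    rw [hf, pow_succ (-1:ℂ) j, pow_succ ρ j]
    linear_combination (((-1:ℂ))^j * (j.factorial : ℂ) * (m.choose j : ℂ)
      * w ^ (m-j) * w' ^ (n-j) * ρ^j * ρ) * hc
  rw [hL, hT1, Finset.sum_add_distrib]
  linear_combination -hT2


def F (m n : ℕ) (x y σ : ℂ) : ℂ :=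
  ∑ k ∈ Finset.range (m+n+1),
    I^(m+n-k) * cc m n k * CH k x σ * CH (m+n-k) y σ

lemma FstepM (m n : ℕ) (x y σ : ℂ) :
    F (m+1) n x y σ = (x + y*I) * F m n x y σ - 2*(n:ℂ)*σ*F m (n-1) x y σ := by
  have hterm : ∀ k ∈ Finset.range (m+n+1),
      (x + y*I) * (I^(m+n-k) * cc m n k * CH k x σ * CH (m+n-k) y σ)
        = I^(m+n-k) * cc m n k * CH (k+1) x σ * CH (m+n-k) y σ
          + I^(m+n-k) * cc m n k * ((k:ℂ)*σ) * CH (k-1) x σ * CH (m+n-k) y σ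
          + I^(m+n-k+1) * cc m n k * CH k x σ * CH (m+n-k+1) y σ
          + I^(m+n-k+1) * cc m n k * ((m+n-k : ℕ):ℂ) * σ * CH k x σ * CH (m+n-k-1) y σ := by
    intro k _
    have h1 := CH_rec k x σ
    have h2 := CH_rec (m+n-k) y σ
    simp only [pow_succ]
    linear_combination (I^(m+n-k) * cc m n k * CH (m+n-k) y σ) * h1
      + (I^(m+n-k) * I * cc m n k * CH k x σ) * h2
  have hexp : (x + y*I) * F m n x y σ
      = (∑ k ∈ Finset.range (m+n+1), I^(m+n-k) * cc m n k * CH (k+1) x σ * CH (m+n-k) y σ)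
        + (∑ k ∈ Finset.range (m+n+1), I^(m+n-k) * cc m n k * ((k:ℂ)*σ) * CH (k-1) x σ * CH (m+n-k) y σ)
        + (∑ k ∈ Finset.range (m+n+1), I^(m+n-k+1) * cc m n k * CH k x σ * CH (m+n-k+1) y σ)
        + (∑ k ∈ Finset.range (m+n+1), I^(m+n-k+1) * cc m n k * ((m+n-k : ℕ):ℂ) * σ * CH k x σ * CH (m+n-k-1) y σ) := by
    rw [F, Finset.mul_sum, Finset.sum_congr rfl hterm]
    rw [Finset.sum_add_distrib, Finset.sum_add_distrib, Finset.sum_add_distrib]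
  have hS3 : (∑ k ∈ Finset.range (m+n+1), I^(m+n-k+1) * cc m n k * CH k x σ * CH (m+n-k+1) y σ)
      = ∑ k ∈ Finset.range (m+n+1), I^(m+n+1-k) * cc m n k * CH k x σ * CH (m+n+1-k) y σ := by
    apply Finset.sum_congr rfl
    intro k hk
    have hk' : k ≤ m+n := by
      have := Finset.mem_range.mp hk; omega
    have h : m+n-k+1 = m+n+1-k := by omega
    rw [h]
  -- part 1 : F (m+1) n = S1 + B1
  have hB1 : (∑ k ∈ Finset.range (m+n+1), I^(m+n+1-k) * cc m n k * CH k x σ * CH (m+n+1-k) y σ)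
      = (∑ i ∈ Finset.range (m+n), I^(m+n-i) * cc m n (i+1) * CH (i+1) x σ * CH (m+n-i) y σ)
        + I^(m+n+1) * cc m n 0 * CH 0 x σ * CH (m+n+1) y σ := by
    rw [Finset.sum_range_succ']
    simp only [Nat.add_sub_add_right, Nat.sub_zero]
  have hF1 : F (m+1) n x y σ
      = (∑ i ∈ Finset.range (m+n), I^(m+n-i) * cc m n (i+1) * CH (i+1) x σ * CH (m+n-i) y σ)
        + (∑ i ∈ Finset.range (m+n+1), I^(m+n-i) * cc m n i * CH (i+1) x σ * CH (m+n-i) y σ)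
        + I^(m+n+1) * cc m n 0 * CH 0 x σ * CH (m+n+1) y σ := by
    rw [F]
    simp only [show m+1+n = m+n+1 from by omega]
    rw [Finset.sum_range_succ' _ (m+n+1)]
    simp only [Nat.add_sub_add_right, Nat.sub_zero, cc_succ_left, cc_succ_left_zero,
      mul_add, add_mul]
    rw [Finset.sum_add_distrib]
    rw [Finset.sum_range_succ
      (fun i => I^(m+n-i) * cc m n (i+1) * CH (i+1) x σ * CH (m+n-i) y σ) (m+n)]
    rw [cc_vanish (show m+n < m+n+1 by omega)]
    ring
  -- part 2 : S2 + S4 = 2 n σ F m (n-1)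
  have hS2 : (∑ k ∈ Finset.range (m+n+1), I^(m+n-k) * cc m n k * ((k:ℂ)*σ) * CH (k-1) x σ * CH (m+n-k) y σ)
      = ∑ i ∈ Finset.range (m+n), I^(m+n-(i+1)) * cc m n (i+1) * (((i:ℂ)+1)*σ) * CH i x σ * CH (m+n-(i+1)) y σ := by
    rw [Finset.sum_range_succ']
    simp
  have hS4 : (∑ k ∈ Finset.range (m+n+1), I^(m+n-k+1) * cc m n k * ((m+n-k : ℕ):ℂ) * σ * CH k x σ * CH (m+n-k-1) y σ)
      = ∑ k ∈ Finset.range (m+n), I^(m+n-k+1) * cc m n k * ((m+n-k : ℕ):ℂ) * σ * CH k x σ * CH (m+n-k-1) y σ := by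
    rw [Finset.sum_range_succ]
    simp
  have hpart2 : (∑ i ∈ Finset.range (m+n), I^(m+n-(i+1)) * cc m n (i+1) * (((i:ℂ)+1)*σ) * CH i x σ * CH (m+n-(i+1)) y σ)
        + (∑ k ∈ Finset.range (m+n), I^(m+n-k+1) * cc m n k * ((m+n-k : ℕ):ℂ) * σ * CH k x σ * CH (m+n-k-1) y σ)
      = ∑ k ∈ Finset.range (m+n), 2*(n:ℂ)*σ * (I^(m+n-k-1) * cc m (n-1) k * CH k x σ * CH (m+n-k-1) y σ) := by
    rw [← Finset.sum_add_distrib]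
    apply Finset.sum_congr rfl
    intro k hk
    have hk' : k < m+n := Finset.mem_range.mp hk
    have hid := cc_id2 m n k
    have hcast : ((m+n-k : ℕ):ℂ) = (m:ℂ)+(n:ℂ)-(k:ℂ) := by
      push_cast [Nat.cast_sub (le_of_lt hk')]
      ring
    have he1 : m+n-(k+1) = m+n-k-1 := by omega
    have he2 : m+n-k+1 = (m+n-k-1)+2 := by omega
    rw [he1, he2, hcast, pow_add]
    have hI2 : (I:ℂ)^2 = -1 := I_sq
    rw [hI2]
    linear_combination (I^(m+n-k-1) * σ * CH k x σ * CH (m+n-k-1) y σ) * hid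
  have hFn1 : (∑ k ∈ Finset.range (m+n), 2*(n:ℂ)*σ * (I^(m+n-k-1) * cc m (n-1) k * CH k x σ * CH (m+n-k-1) y σ))
      = 2*(n:ℂ)*σ*F m (n-1) x y σ := by
    cases n with
    | zero => simp
    | succ t =>
      rw [F, Finset.mul_sum]
      simp only [Nat.add_sub_cancel]
      have hr : m+(t+1) = m+t+1 := by omega
      rw [hr]
      apply Finset.sum_congr rfl
      intro k hk
      have hk' : k < m+t+1 := Finset.mem_range.mp hk
      have : m+t+1-k-1 = m+t-k := by omega
      rw [this]
  rw [hexp, hS3, hS2, hS4, hB1, hF1]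
  linear_combination -hpart2 - hFn1

lemma Fstep0 (n : ℕ) (x y σ : ℂ) :
    F 0 (n+1) x y σ = (x - y*I) * F 0 n x y σ := by
  have hterm : ∀ k ∈ Finset.range (0+n+1),
      (x - y*I) * (I^(0+n-k) * cc 0 n k * CH k x σ * CH (0+n-k) y σ)
        = I^(n-k) * cc 0 n k * CH (k+1) x σ * CH (n-k) y σ
          + I^(n-k) * cc 0 n k * ((k:ℂ)*σ) * CH (k-1) x σ * CH (n-k) y σ
          - I^(n-k+1) * cc 0 n k * CH k x σ * CH (n-k+1) y σ
          - I^(n-k+1) * cc 0 n k * ((n-k : ℕ):ℂ) * σ * CH k x σ * CH (n-k-1) y σ := by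
    intro k _
    have h1 := CH_rec k x σ
    have h2 := CH_rec (n-k) y σ
    simp only [pow_succ, Nat.zero_add]
    linear_combination (I^(n-k) * cc 0 n k * CH (n-k) y σ) * h1
      - (I^(n-k) * I * cc 0 n k * CH k x σ) * h2
  have hexp : (x - y*I) * F 0 n x y σ
      = (∑ k ∈ Finset.range (n+1), I^(n-k) * cc 0 n k * CH (k+1) x σ * CH (n-k) y σ)
        + (∑ k ∈ Finset.range (n+1), I^(n-k) * cc 0 n k * ((k:ℂ)*σ) * CH (k-1) x σ * CH (n-k) y σ)
        - (∑ k ∈ Finset.range (n+1), I^(n-k+1) * cc 0 n k * CH k x σ * CH (n-k+1) y σ)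
        - (∑ k ∈ Finset.range (n+1), I^(n-k+1) * cc 0 n k * ((n-k : ℕ):ℂ) * σ * CH k x σ * CH (n-k-1) y σ) := by
    rw [F, Finset.mul_sum, Finset.sum_congr rfl hterm]
    simp only [Nat.zero_add] at *
    rw [Finset.sum_sub_distrib, Finset.sum_sub_distrib, Finset.sum_add_distrib]
  have hS3 : (∑ k ∈ Finset.range (n+1), I^(n-k+1) * cc 0 n k * CH k x σ * CH (n-k+1) y σ)
      = ∑ k ∈ Finset.range (n+1), I^(n+1-k) * cc 0 n k * CH k x σ * CH (n+1-k) y σ := by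
    apply Finset.sum_congr rfl
    intro k hk
    have hk' : k ≤ n := by
      have := Finset.mem_range.mp hk; omega
    have h : n-k+1 = n+1-k := by omega
    rw [h]
  have hB1 : (∑ k ∈ Finset.range (n+1), I^(n+1-k) * cc 0 n k * CH k x σ * CH (n+1-k) y σ)
      = (∑ i ∈ Finset.range n, I^(n-i) * cc 0 n (i+1) * CH (i+1) x σ * CH (n-i) y σ)
        + I^(n+1) * cc 0 n 0 * CH 0 x σ * CH (n+1) y σ := by
    rw [Finset.sum_range_succ']
    simp only [Nat.add_sub_add_right, Nat.sub_zero]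
  have hF1 : F 0 (n+1) x y σ
      = (∑ i ∈ Finset.range (n+1), I^(n-i) * cc 0 n i * CH (i+1) x σ * CH (n-i) y σ)
        - (∑ i ∈ Finset.range n, I^(n-i) * cc 0 n (i+1) * CH (i+1) x σ * CH (n-i) y σ)
        - I^(n+1) * cc 0 n 0 * CH 0 x σ * CH (n+1) y σ := by
    rw [F]
    simp only [Nat.zero_add]
    rw [Finset.sum_range_succ' _ (n+1)]
    simp only [Nat.add_sub_add_right, Nat.sub_zero, cc_succ_right, cc_succ_right_zero,
      mul_sub, sub_mul, mul_neg, neg_mul]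
    rw [Finset.sum_sub_distrib]
    rw [Finset.sum_range_succ
      (fun i => I^(n-i) * cc 0 n (i+1) * CH (i+1) x σ * CH (n-i) y σ) n]
    rw [cc_vanish (show 0+n < n+1 by omega)]
    ring
  have hS2 : (∑ k ∈ Finset.range (n+1), I^(n-k) * cc 0 n k * ((k:ℂ)*σ) * CH (k-1) x σ * CH (n-k) y σ)
      = ∑ i ∈ Finset.range n, I^(n-(i+1)) * cc 0 n (i+1) * (((i:ℂ)+1)*σ) * CH i x σ * CH (n-(i+1)) y σ := by
    rw [Finset.sum_range_succ']
    simp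
  have hS4 : (∑ k ∈ Finset.range (n+1), I^(n-k+1) * cc 0 n k * ((n-k : ℕ):ℂ) * σ * CH k x σ * CH (n-k-1) y σ)
      = ∑ k ∈ Finset.range n, I^(n-k+1) * cc 0 n k * ((n-k : ℕ):ℂ) * σ * CH k x σ * CH (n-k-1) y σ := by
    rw [Finset.sum_range_succ]
    simp
  have hpart2 : (∑ i ∈ Finset.range n, I^(n-(i+1)) * cc 0 n (i+1) * (((i:ℂ)+1)*σ) * CH i x σ * CH (n-(i+1)) y σ)
        - (∑ k ∈ Finset.range n, I^(n-k+1) * cc 0 n k * ((n-k : ℕ):ℂ) * σ * CH k x σ * CH (n-k-1) y σ)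
      = 0 := by
    rw [← Finset.sum_sub_distrib]
    apply Finset.sum_eq_zero
    intro k hk
    have hk' : k < n := Finset.mem_range.mp hk
    have hid := cc_id3 n k
    have hcast : ((n-k : ℕ):ℂ) = (n:ℂ)-(k:ℂ) := by
      push_cast [Nat.cast_sub (le_of_lt hk')]
      ring
    have he1 : n-(k+1) = n-k-1 := by omega
    have he2 : n-k+1 = (n-k-1)+2 := by omega
    rw [he1, he2, hcast, pow_add, I_sq]
    linear_combination (I^(n-k-1) * σ * CH k x σ * CH (n-k-1) y σ) * hid
  rw [hexp, hS3, hS2, hS4, hB1, hF1]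
  linear_combination -hpart2

lemma key (m : ℕ) : ∀ (n : ℕ) (x y σ : ℂ),
    HLI2 m n (x + y*I) (x - y*I) (2*σ) = F m n x y σ := by
  induction m with
  | zero =>
    intro n
    induction n with
    | zero => intro x y σ; simp [HLI2_zero_left, F, cc_zero_zero, CH_zero]
    | succ t ih =>
      intro x y σ
      rw [HLI2_zero_left, pow_succ, mul_comm ((x-y*I)^t) (x-y*I),
        ← HLI2_zero_left t (x+y*I) (x-y*I) (2*σ), ih, ← Fstep0]
  | succ s ih =>
    intro n
    cases n with
    | zero =>
      intro x y σ
      rw [HLI2_zero_right, pow_succ, mul_comm ((x+y*I)^s) (x+y*I),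
        ← HLI2_zero_right s (x+y*I) (x-y*I) (2*σ), ih, FstepM]
      simp
    | succ t =>
      intro x y σ
      rw [HLI2_rec, ih, ih, FstepM]
      simp only [Nat.add_sub_cancel]
      push_cast
      ring

lemma Herm_cast (n : ℕ) (x ρ : ℝ) : ((Herm n x ρ : ℝ) : ℂ) = CH n (x:ℂ) (ρ:ℂ) := by
  rw [Herm, CH]
  push_cast
  rfl

/-- expansion of `J_{m,l−m}` in products of Hermite polynomials:
`J_{m,l−m}(z,ρ) = ∑_{k=0}^{l} i^{l−k} (∑_{u+v=k} C(m,u) C(l−m,v) (−1)^{l−m−v})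
H_k(x,ρ/2) H_{l−k}(y,ρ/2)` where `z = x+iy`. -/
theorem stmt19 (l m : ℕ) (hm : m ≤ l) (ρ : ℝ) (hρ : 0 < ρ) (x y : ℝ) :
    HLI m (l - m) ((x : ℂ) + (y : ℂ) * Complex.I) ρ =
      ∑ k ∈ Finset.range (l + 1),
        Complex.I ^ (l - k) *
          (∑ uv ∈ Finset.HasAntidiagonal.antidiagonal k,
            (m.choose uv.1 : ℂ) * ((l - m).choose uv.2 : ℂ) * (-1 : ℂ) ^ (l - m - uv.2)) *
          ((Herm k x (ρ / 2) : ℝ) : ℂ) * ((Herm (l - k) y (ρ / 2) : ℝ) : ℂ) := by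
  have hml : m + (l - m) = l := by omega
  have hz : (starRingEnd ℂ) ((x:ℂ) + (y:ℂ)*I) = (x:ℂ) - (y:ℂ)*I := by
    simp [sub_eq_add_neg]
  have hHLI : HLI m (l-m) ((x:ℂ)+(y:ℂ)*I) ρ
      = HLI2 m (l-m) ((x:ℂ)+(y:ℂ)*I) ((x:ℂ)-(y:ℂ)*I) ((ρ:ℝ):ℂ) := by
    rw [HLI, HLI2, hz]
  rw [hHLI, show ((ρ:ℝ):ℂ) = 2*(((ρ/2 : ℝ):ℝ):ℂ) by push_cast; ring]
  rw [key m (l-m) (x:ℂ) (y:ℂ) (((ρ/2 : ℝ):ℝ):ℂ)]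
  rw [F, hml]
  apply Finset.sum_congr rfl
  intro k hk
  rw [cc_eq_sum, ← Herm_cast, ← Herm_cast]


end
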